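/- Let φ ∈ 𝒮(ℝ^n), and p, q ∈ (0,∞] with p ≤ q. Then the space 𝒪^p(φ) := { u ∈ 𝒮'(ℝ^n) : u = u*φ and u ∈ L^p } embeds continuously into 𝒪^q(φ): there is C > 0 such that ‖u‖_{L^q} ≤ C ‖u‖_{L^p} for all u ∈ 𝒪^p(φ). -/

import Mathlib

open MeasureTheory ENNReal Filter Set Topology

/-!
Everything reduces to a sup-norm bound `‖u‖_∞ ≤ C₀ ‖u‖_p`, since `‖u‖_q^q ≤ ‖u‖_∞^(q-p) ‖u‖_p^p`.

For `p ≥ 1`, insert `|u(y)| ≤ t + t^(1-p) |u(y)|^p` into `u = u * φ` and take `t = ‖u‖_p`.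

For `p < 1`, split `|u| = |u|^p |u|^(1-p)` in `u = u * φ`. With the weighted supremum
`K_ε = sup_y |u(y)| / (1 + ε|y|)^k`, finite by the polynomial growth of `u`, and the
submultiplicativity `1 + ε|y| ≤ (1 + ε|x|)(1 + |x - y|)`, this gives `K_ε ≤ K_ε^(1-p) S ‖u‖_p^p`,
where `S` bounds `(1 + |z|)^k |φ(z)|` and does not depend on `ε`. Hence `K_ε ≤ (S ‖u‖_p^p)^(1/p)`,
and `ε → 0` shows that `u` is bounded. Running the same argument again with `k = 0` yields a
constant that depends on `φ` only.
-/

lemma le_rpow_inv_of_le_rpow_one_sub_mul {K c p : ℝ} (hK : 0 ≤ K) (hc : 0 ≤ c) (hp : 0 < p)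
    (h : K ≤ K ^ (1 - p) * c) : K ≤ c ^ p⁻¹ := by
  rw [Real.le_rpow_inv_iff_of_pos hK hc hp]
  rcases hK.eq_or_lt with rfl | hK
  · rwa [Real.zero_rpow hp.ne']
  · refine le_of_mul_le_mul_left ?_ (Real.rpow_pos_of_pos hK (1 - p))
    rwa [← Real.rpow_add hK, sub_add_cancel, Real.rpow_one]

lemma le_add_rpow_one_sub_mul_rpow {a t p : ℝ} (ha : 0 ≤ a) (ht : 0 < t) (hp : 1 ≤ p) :
    a ≤ t + t ^ (1 - p) * a ^ p := by
  rcases le_or_gt a t with hat | hat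
  · linarith [mul_nonneg (Real.rpow_nonneg ht.le (1 - p)) (Real.rpow_nonneg ha p)]
  · calc a = a ^ (1 - p) * a ^ p := by
          rw [← Real.rpow_add (ht.trans hat), sub_add_cancel, Real.rpow_one]
      _ ≤ t ^ (1 - p) * a ^ p := by
          have : a ^ (1 - p) ≤ t ^ (1 - p) := Real.rpow_le_rpow_of_nonpos ht hat.le (by linarith)
          gcongr
      _ ≤ t + t ^ (1 - p) * a ^ p := le_add_of_nonneg_left ht.le

theorem eLpNorm_le_rpow_mul_eLpNorm_rpow {α F : Type*} [MeasurableSpace α] {μ : Measure α}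
    [NormedAddCommGroup F] {f : α → F} (hf : AEStronglyMeasurable f μ) {p q : ℝ≥0∞}
    (hp0 : p ≠ 0) (hp : p ≠ ∞) (hpq : p ≤ q) {B : ℝ≥0∞} (hB : ∀ᵐ x ∂μ, ‖f x‖ₑ ≤ B) :
    eLpNorm f q μ ≤ B ^ (1 - p.toReal / q.toReal) * eLpNorm f p μ ^ (p.toReal / q.toReal) := by
  rcases eq_or_ne q ∞ with rfl | hq
  · simpa using eLpNormEssSup_le_of_ae_enorm_bound hB
  have hpr : 0 < p.toReal := toReal_pos hp0 hp
  have hpqr : p.toReal ≤ q.toReal := toReal_mono hq hpq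
  have hqr : 0 < q.toReal := hpr.trans_le hpqr
  have hlint : ∫⁻ x, ‖f x‖ₑ ^ q.toReal ∂μ ≤
      B ^ (q.toReal - p.toReal) * ∫⁻ x, ‖f x‖ₑ ^ p.toReal ∂μ := by
    rw [← lintegral_const_mul'' _ (hf.enorm.pow_const _)]
    refine lintegral_mono_ae (hB.mono fun x hx => ?_)
    rw [← sub_add_cancel q.toReal p.toReal, rpow_add_of_nonneg _ _ (by linarith) hpr.le,
      add_sub_cancel_right]
    gcongr
  have hq0 : q ≠ 0 := (pos_iff_ne_zero.1 ((pos_iff_ne_zero.2 hp0).trans_le hpq))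
  rw [eLpNorm_eq_lintegral_rpow_enorm_toReal hq0 hq, eLpNorm_eq_lintegral_rpow_enorm_toReal hp0 hp]
  calc (∫⁻ x, ‖f x‖ₑ ^ q.toReal ∂μ) ^ (1 / q.toReal)
      ≤ (B ^ (q.toReal - p.toReal) * ∫⁻ x, ‖f x‖ₑ ^ p.toReal ∂μ) ^ (1 / q.toReal) := by gcongr
    _ = _ := by
      rw [mul_rpow_of_nonneg _ _ (by positivity), ← rpow_mul, ← rpow_mul]
      congr 2 <;> field_simp

section Reproducing

variable {E R : Type*} [NormedAddCommGroup E] [MeasurableSpace E] {μ : Measure E}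
  [NormedRing R] [NormedSpace ℝ R] {φ u : E → R}

def IsReproducedBy (μ : Measure E) (φ u : E → R) : Prop :=
  ∀ x, u x = ∫ y, u y * φ (x - y) ∂μ

namespace IsReproducedBy

variable {p : ℝ} {k : ℕ} {S S₀ : ℝ} {w : E → ℝ}

theorem norm_le_integral_of_le (hu : IsReproducedBy μ φ u) {x : E} {g : E → ℝ}
    (hg : Integrable g μ) (h : ∀ y, ‖u y‖ * ‖φ (x - y)‖ ≤ g y) : ‖u x‖ ≤ ∫ y, g y ∂μ := by
  rw [hu x]
  refine (norm_integral_le_integral_norm _).trans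
    (integral_mono_of_nonneg (ae_of_all _ fun _ => norm_nonneg _) hg (ae_of_all _ fun y => ?_))
  exact (norm_mul_le _ _).trans (h y)

theorem norm_le_rpow_mul_weight_of_le (hu : IsReproducedBy μ φ u) (hp0 : 0 ≤ p) (hp1 : p ≤ 1)
    (hint : Integrable (fun y => ‖u y‖ ^ p) μ) (hS : ∀ z, (1 + ‖z‖) ^ k * ‖φ z‖ ≤ S)
    (hw1 : ∀ y, 1 ≤ w y) (hw : ∀ x y, w y ≤ w x * (1 + ‖x - y‖) ^ k)
    {K : ℝ} (hK0 : 0 ≤ K) (hK : ∀ y, ‖u y‖ ≤ K * w y) (x : E) :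
    ‖u x‖ ≤ K ^ (1 - p) * (S * ∫ y, ‖u y‖ ^ p ∂μ) * w x := by
  have hwx : 0 ≤ w x := zero_le_one.trans (hw1 x)
  have key : ∀ y, ‖u y‖ * ‖φ (x - y)‖ ≤ K ^ (1 - p) * S * w x * ‖u y‖ ^ p := by
    intro y
    have hsplit : ‖u y‖ ^ p * ‖u y‖ ^ (1 - p) = ‖u y‖ := by
      rw [← Real.rpow_add' (norm_nonneg _) (by norm_num), add_sub_cancel, Real.rpow_one]
    have hweight : ‖u y‖ ^ (1 - p) ≤ K ^ (1 - p) * (w x * (1 + ‖x - y‖) ^ k) := calc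
      ‖u y‖ ^ (1 - p) ≤ (K * w y) ^ (1 - p) :=
          Real.rpow_le_rpow (norm_nonneg _) (hK y) (by linarith)
      _ = K ^ (1 - p) * w y ^ (1 - p) := Real.mul_rpow hK0 (zero_le_one.trans (hw1 y))
      _ ≤ K ^ (1 - p) * w y := by
          gcongr
          exact Real.rpow_le_self_of_one_le (hw1 y) (by linarith)
      _ ≤ K ^ (1 - p) * (w x * (1 + ‖x - y‖) ^ k) := by gcongr; exact hw x y
    calc ‖u y‖ * ‖φ (x - y)‖ = ‖u y‖ ^ p * ‖u y‖ ^ (1 - p) * ‖φ (x - y)‖ := by rw [hsplit]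
      _ ≤ ‖u y‖ ^ p * (K ^ (1 - p) * (w x * (1 + ‖x - y‖) ^ k)) * ‖φ (x - y)‖ := by gcongr
      _ = K ^ (1 - p) * w x * ‖u y‖ ^ p * ((1 + ‖x - y‖) ^ k * ‖φ (x - y)‖) := by ring
      _ ≤ K ^ (1 - p) * w x * ‖u y‖ ^ p * S := by gcongr; exact hS _
      _ = K ^ (1 - p) * S * w x * ‖u y‖ ^ p := by ring
  calc ‖u x‖ ≤ ∫ y, K ^ (1 - p) * S * w x * ‖u y‖ ^ p ∂μ :=
        hu.norm_le_integral_of_le (hint.const_mul _) key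
    _ = K ^ (1 - p) * (S * ∫ y, ‖u y‖ ^ p ∂μ) * w x := by rw [integral_const_mul]; ring

theorem norm_le_rpow_inv_mul_weight (hu : IsReproducedBy μ φ u) (hp0 : 0 < p) (hp1 : p ≤ 1)
    (hint : Integrable (fun y => ‖u y‖ ^ p) μ) (hS : ∀ z, (1 + ‖z‖) ^ k * ‖φ z‖ ≤ S)
    (hw1 : ∀ y, 1 ≤ w y) (hw : ∀ x y, w y ≤ w x * (1 + ‖x - y‖) ^ k)
    (hbdd : BddAbove (range fun y => ‖u y‖ / w y)) (x : E) :
    ‖u x‖ ≤ (S * ∫ y, ‖u y‖ ^ p ∂μ) ^ p⁻¹ * w x := by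
  have hw0 : ∀ y, 0 < w y := fun y => zero_lt_one.trans_le (hw1 y)
  have hSI : 0 ≤ S * ∫ y, ‖u y‖ ^ p ∂μ :=
    mul_nonneg ((by positivity : (0 : ℝ) ≤ (1 + ‖(0 : E)‖) ^ k * ‖φ 0‖).trans (hS 0))
      (integral_nonneg fun _ => by positivity)
  set K := ⨆ y, ‖u y‖ / w y
  have hK : ∀ y, ‖u y‖ ≤ K * w y := fun y => (div_le_iff₀ (hw0 y)).1 (le_ciSup hbdd y)
  have hK0 : 0 ≤ K := (div_nonneg (norm_nonneg _) (hw0 x).le).trans (le_ciSup hbdd x)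
  have hK_le : K ≤ K ^ (1 - p) * (S * ∫ y, ‖u y‖ ^ p ∂μ) := ciSup_le fun y =>
    (div_le_iff₀ (hw0 y)).2 (hu.norm_le_rpow_mul_weight_of_le hp0.le hp1 hint hS hw1 hw hK0 hK y)
  calc ‖u x‖ ≤ K * w x := hK x
    _ ≤ (S * ∫ y, ‖u y‖ ^ p ∂μ) ^ p⁻¹ * w x :=
        mul_le_mul_of_nonneg_right (le_rpow_inv_of_le_rpow_one_sub_mul hK0 hSI hp0 hK_le)
          (hw0 x).le

theorem norm_le_of_norm_le_mul_pow (hu : IsReproducedBy μ φ u) (hp0 : 0 < p) (hp1 : p ≤ 1)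
    (hint : Integrable (fun y => ‖u y‖ ^ p) μ) (hS : ∀ z, (1 + ‖z‖) ^ k * ‖φ z‖ ≤ S)
    {A : ℝ} (hA : ∀ y, ‖u y‖ ≤ A * (1 + ‖y‖) ^ k) (x : E) :
    ‖u x‖ ≤ (S * ∫ y, ‖u y‖ ^ p ∂μ) ^ p⁻¹ := by
  set L := (S * ∫ y, ‖u y‖ ^ p ∂μ) ^ p⁻¹
  have hA0 : 0 ≤ A := by simpa using (norm_nonneg _).trans (hA 0)
  have hweighted : ∀ ε ∈ Ioo (0 : ℝ) 1, ‖u x‖ ≤ L * (1 + ε * ‖x‖) ^ k := by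
    rintro ε ⟨hε0, hε1⟩
    refine hu.norm_le_rpow_inv_mul_weight hp0 hp1 hint hS (w := fun y => (1 + ε * ‖y‖) ^ k)
      (fun y => one_le_pow₀ (le_add_of_nonneg_right (by positivity))) (fun x y => ?_)
      ⟨A / ε ^ k, ?_⟩ x
    · rw [← mul_pow]
      gcongr
      nlinarith [mul_le_mul_of_nonneg_left (norm_le_norm_add_norm_sub x y) hε0.le,
        mul_le_of_le_one_left (norm_nonneg (x - y)) hε1.le,
        mul_nonneg (mul_nonneg hε0.le (norm_nonneg x)) (norm_nonneg (x - y))]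
    · rintro _ ⟨y, rfl⟩
      rw [div_le_div_iff₀ (by positivity) (by positivity)]
      calc ‖u y‖ * ε ^ k ≤ A * (1 + ‖y‖) ^ k * ε ^ k := by gcongr; exact hA y
        _ = A * (ε + ε * ‖y‖) ^ k := by rw [mul_assoc, ← mul_pow, add_mul, one_mul, mul_comm ‖y‖]
        _ ≤ A * (1 + ε * ‖y‖) ^ k := by gcongr
  have hlim : Tendsto (fun ε : ℝ => L * (1 + ε * ‖x‖) ^ k) (𝓝[>] 0) (𝓝 L) := by
    have hcont : Continuous fun ε : ℝ => L * (1 + ε * ‖x‖) ^ k := by fun_prop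
    simpa using (hcont.tendsto 0).mono_left nhdsWithin_le_nhds
  exact ge_of_tendsto hlim (eventually_of_mem (Ioo_mem_nhdsGT one_pos) hweighted)

theorem norm_le_of_le_one (hu : IsReproducedBy μ φ u) (hp0 : 0 < p) (hp1 : p ≤ 1)
    (hint : Integrable (fun y => ‖u y‖ ^ p) μ)
    (hdecay : ∀ k : ℕ, ∃ S, ∀ z, (1 + ‖z‖) ^ k * ‖φ z‖ ≤ S)
    (hgrowth : ∃ (A : ℝ) (k : ℕ), ∀ y, ‖u y‖ ≤ A * (1 + ‖y‖) ^ k)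
    (hS₀ : ∀ z, ‖φ z‖ ≤ S₀) (x : E) :
    ‖u x‖ ≤ (S₀ * ∫ y, ‖u y‖ ^ p ∂μ) ^ p⁻¹ := by
  obtain ⟨A, k, hA⟩ := hgrowth
  obtain ⟨S, hS⟩ := hdecay k
  have hbounded : ∀ y, ‖u y‖ ≤ (S * ∫ y, ‖u y‖ ^ p ∂μ) ^ p⁻¹ * (1 + ‖y‖) ^ 0 := by
    simpa using hu.norm_le_of_norm_le_mul_pow hp0 hp1 hint hS hA
  exact hu.norm_le_of_norm_le_mul_pow hp0 hp1 hint (by simpa using hS₀) hbounded x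

theorem norm_le_mul_add_rpow_mul [BorelSpace E] [μ.IsAddLeftInvariant] [μ.IsNegInvariant]
    (hu : IsReproducedBy μ φ u) (hp1 : 1 ≤ p) (hint : Integrable (fun y => ‖u y‖ ^ p) μ)
    (hφ : Integrable φ μ) (hS₀ : ∀ z, ‖φ z‖ ≤ S₀) (x : E) (t : ℝ) (ht : 0 < t) :
    ‖u x‖ ≤ t * ∫ z, ‖φ z‖ ∂μ + t ^ (1 - p) * (S₀ * ∫ y, ‖u y‖ ^ p ∂μ) := by
  have hφx : Integrable (fun y => ‖φ (x - y)‖) μ := hφ.norm.comp_sub_left x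
  calc ‖u x‖ ≤ ∫ y, (t * ‖φ (x - y)‖ + t ^ (1 - p) * S₀ * ‖u y‖ ^ p) ∂μ := by
        refine hu.norm_le_integral_of_le ((hφx.const_mul t).add (hint.const_mul _)) fun y => ?_
        calc ‖u y‖ * ‖φ (x - y)‖ ≤ (t + t ^ (1 - p) * ‖u y‖ ^ p) * ‖φ (x - y)‖ := by
              gcongr; exact le_add_rpow_one_sub_mul_rpow (norm_nonneg _) ht hp1
          _ = t * ‖φ (x - y)‖ + t ^ (1 - p) * ‖u y‖ ^ p * ‖φ (x - y)‖ := by ring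
          _ ≤ t * ‖φ (x - y)‖ + t ^ (1 - p) * ‖u y‖ ^ p * S₀ := by gcongr; exact hS₀ _
          _ = t * ‖φ (x - y)‖ + t ^ (1 - p) * S₀ * ‖u y‖ ^ p := by ring
    _ = t * ∫ z, ‖φ z‖ ∂μ + t ^ (1 - p) * (S₀ * ∫ y, ‖u y‖ ^ p ∂μ) := by
        rw [integral_add (hφx.const_mul t) (hint.const_mul _), integral_const_mul,
          integral_const_mul, integral_sub_left_eq_self (fun z => ‖φ z‖) μ x]
        ring

theorem norm_le_of_one_le [BorelSpace E] [μ.IsAddLeftInvariant] [μ.IsNegInvariant]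
    (hu : IsReproducedBy μ φ u) (hp1 : 1 ≤ p) (hint : Integrable (fun y => ‖u y‖ ^ p) μ)
    (hφ : Integrable φ μ) (hS₀ : ∀ z, ‖φ z‖ ≤ S₀) (x : E) :
    ‖u x‖ ≤ (∫ z, ‖φ z‖ ∂μ + S₀) * (∫ y, ‖u y‖ ^ p ∂μ) ^ p⁻¹ := by
  have hbound := hu.norm_le_mul_add_rpow_mul hp1 hint hφ hS₀ x
  set I := ∫ y, ‖u y‖ ^ p ∂μ
  set c := ∫ z, ‖φ z‖ ∂μ
  have hI0 : 0 ≤ I := integral_nonneg fun _ => by positivity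
  rcases hI0.eq_or_lt with hI | hI
  · have hbound₀ : ∀ t > 0, ‖u x‖ ≤ t * c := by simpa [← hI] using hbound
    rw [← hI, Real.zero_rpow (by positivity), mul_zero]
    have hlim : Tendsto (fun t : ℝ => t * c) (𝓝[>] 0) (𝓝 0) := by
      have hcont : Continuous fun t : ℝ => t * c := by fun_prop
      simpa using (hcont.tendsto 0).mono_left nhdsWithin_le_nhds
    exact ge_of_tendsto hlim (eventually_nhdsWithin_of_forall hbound₀)
  · have hIp : (I ^ p⁻¹) ^ (1 - p) * I = I ^ p⁻¹ := by
      rw [← Real.rpow_mul hI.le, ← Real.rpow_add_one hI.ne']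
      congr 1
      field_simp
      ring
    calc ‖u x‖ ≤ I ^ p⁻¹ * c + (I ^ p⁻¹) ^ (1 - p) * (S₀ * I) :=
          hbound _ (Real.rpow_pos_of_pos hI _)
      _ = (c + S₀) * I ^ p⁻¹ := by rw [mul_left_comm, hIp]; ring

end IsReproducedBy

end Reproducing

theorem SchwartzMap.exists_one_add_pow_mul_norm_le {E F : Type*} [NormedAddCommGroup E]
    [NormedSpace ℝ E] [NormedAddCommGroup F] [NormedSpace ℝ F] (φ : SchwartzMap E F) (k : ℕ) :
    ∃ S > 0, ∀ z, (1 + ‖z‖) ^ k * ‖φ z‖ ≤ S :=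
  ⟨2 ^ k * (Finset.Iic (k, 0)).sup (fun m => SchwartzMap.seminorm ℝ m.1 m.2) φ + 1,
    by positivity, fun z => by
      simpa using (φ.one_add_le_sup_seminorm_apply (𝕜 := ℝ) (m := (k, 0)) le_rfl le_rfl z).trans
        (le_add_of_nonneg_right zero_le_one)⟩

theorem exists_enorm_le_mul_eLpNorm_of_isReproducedBy {E R : Type*} [NormedAddCommGroup E]
    [NormedSpace ℝ E] [FiniteDimensional ℝ E] [MeasurableSpace E] [BorelSpace E]
    (μ : Measure E) [μ.IsAddHaarMeasure] [NormedRing R] [NormedSpace ℝ R] (φ : SchwartzMap E R)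
    {p : ℝ≥0∞} (hp0 : p ≠ 0) (hp : p ≠ ∞) :
    ∃ C₀ : ℝ≥0∞, 0 < C₀ ∧ C₀ < ∞ ∧ ∀ u : E → R,
      (∃ (A : ℝ) (k : ℕ), ∀ x, ‖u x‖ ≤ A * (1 + ‖x‖) ^ k) → IsReproducedBy μ φ u →
        MemLp u p μ → ∀ x, ‖u x‖ₑ ≤ C₀ * eLpNorm u p μ := by
  suffices ∃ C₀ : ℝ, 0 < C₀ ∧ ∀ u : E → R,
      (∃ (A : ℝ) (k : ℕ), ∀ x, ‖u x‖ ≤ A * (1 + ‖x‖) ^ k) → IsReproducedBy μ φ u →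
        MemLp u p μ → ∀ x, ‖u x‖ ≤ C₀ * (∫ y, ‖u y‖ ^ p.toReal ∂μ) ^ p.toReal⁻¹ by
    obtain ⟨C₀, hC₀, hbound⟩ := this
    refine ⟨ENNReal.ofReal C₀, ofReal_pos.2 hC₀, ofReal_lt_top, fun u hgrowth hu hmem x => ?_⟩
    rw [hmem.eLpNorm_eq_integral_rpow_norm hp0 hp, ← ofReal_mul hC₀.le, ← ofReal_norm]
    exact ofReal_le_ofReal (hbound u hgrowth hu hmem x)
  have hpr : 0 < p.toReal := toReal_pos hp0 hp
  have hdecay (k : ℕ) : ∃ S, ∀ z, (1 + ‖z‖) ^ k * ‖φ z‖ ≤ S :=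
    (φ.exists_one_add_pow_mul_norm_le k).imp fun _ => And.right
  obtain ⟨S₀, hS₀_pos, hS₀⟩ := φ.exists_one_add_pow_mul_norm_le 0
  simp only [pow_zero, one_mul] at hS₀
  rcases le_total p.toReal 1 with hp1 | hp1
  · refine ⟨S₀ ^ p.toReal⁻¹, by positivity, fun u hgrowth hu hmem x => ?_⟩
    rw [← Real.mul_rpow hS₀_pos.le (integral_nonneg fun _ => by positivity)]
    exact hu.norm_le_of_le_one hpr hp1 (hmem.integrable_norm_rpow hp0 hp) hdecay hgrowth hS₀ x
  · refine ⟨∫ z, ‖φ z‖ ∂μ + S₀, add_pos_of_nonneg_of_pos (integral_nonneg fun _ => norm_nonneg _)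
      hS₀_pos, fun u _ hu hmem x => ?_⟩
    exact hu.norm_le_of_one_le hp1 (hmem.integrable_norm_rpow hp0 hp) φ.integrable hS₀ x

/-- Nikolskii-type embedding.  Let `φ` be a Schwartz function and `0 < p ≤ q ≤ ∞`.
There is `C > 0` such that every tempered distribution `u` with `u = u * φ`
(identified with a continuous function of polynomial growth satisfying the reproducing
identity) belonging to `L^p` satisfies `‖u‖_{L^q} ≤ C ‖u‖_{L^p}`;
that is, `𝒪^p(φ)` embeds continuously into `𝒪^q(φ)`. -/
theorem stmt_8 {n : ℕ} (φ : SchwartzMap (EuclideanSpace ℝ (Fin n)) ℂ) (p q : ℝ≥0∞)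
    (hp : 0 < p) (hpq : p ≤ q) :
    ∃ C : ℝ≥0∞, 0 < C ∧ C < ∞ ∧
      ∀ u : EuclideanSpace ℝ (Fin n) → ℂ, Continuous u →
        (∃ (A : ℝ) (k : ℕ), ∀ x, ‖u x‖ ≤ A * (1 + ‖x‖) ^ k) →
        (∀ x, u x = ∫ y, u y * φ (x - y)) →
        MemLp u p volume →
        eLpNorm u q volume ≤ C * eLpNorm u p volume := by
  rcases eq_or_ne p ∞ with rfl | hp_top
  · refine ⟨1, one_pos, one_lt_top, fun u _ _ _ _ => ?_⟩
    rw [top_le_iff.1 hpq, one_mul]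
  obtain ⟨C₀, hC₀, hC₀_top, hbound⟩ :=
    exists_enorm_le_mul_eLpNorm_of_isReproducedBy volume φ hp.ne' hp_top
  set θ := p.toReal / q.toReal
  have hθ : θ ≤ 1 := by
    rcases eq_or_ne q ∞ with rfl | hq
    · simp [θ]
    · exact div_le_one_of_le₀ (toReal_mono hq hpq) toReal_nonneg
  refine ⟨C₀ ^ (1 - θ), rpow_pos hC₀ hC₀_top.ne, rpow_lt_top_of_nonneg (by linarith) hC₀_top.ne,
    fun u _ hgrowth hu hmem => ?_⟩
  calc eLpNorm u q volume ≤ (C₀ * eLpNorm u p volume) ^ (1 - θ) * eLpNorm u p volume ^ θ :=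
        eLpNorm_le_rpow_mul_eLpNorm_rpow hmem.1 hp.ne' hp_top hpq
          (ae_of_all _ (hbound u hgrowth hu hmem))
    _ = C₀ ^ (1 - θ) * eLpNorm u p volume := by
        rw [mul_rpow_of_nonneg _ _ (by linarith), mul_assoc,
          ← rpow_add_of_nonneg _ _ (by linarith) (by positivity), sub_add_cancel, rpow_one]
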